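/- There exist integers b, c, d, u, v such that for g₁(x) = bx² + cx + d, g₂(x) = ux + v, and f(x) = 2x: the integrals over [0,1] of g₁, g₂, f, and g₁·g₂ are all positive integers, while the integrals over [0,1] of g₁·f, g₂·f, and g₁·g₂·f are all zero. -/
import Mathlib

open intervalIntegral

lemma poly_int (a b c d e : ℝ) :
    ∫ x in (0:ℝ)..1, (a*x^4+b*x^3+c*x^2+d*x+e) = a/5+b/4+c/3+d/2+e := by
  have hi : ∀ k : ℝ, ∀ n : ℕ, IntervalIntegrable (fun x:ℝ => k * x ^ n) MeasureTheory.volume 0 1 :=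
    fun k n => (continuous_const.mul (continuous_pow n)).intervalIntegrable 0 1
  have h : (fun x:ℝ => a*x^4+b*x^3+c*x^2+d*x+e)
      = fun x:ℝ => a*x^4+(b*x^3+(c*x^2+(d*x^1+e*x^0))) := by funext x; ring
  rw [h]
  rw [intervalIntegral.integral_add (hi a 4) (((hi b 3).add ((hi c 2).add ((hi d 1).add (hi e 0)))))]
  rw [intervalIntegral.integral_add (hi b 3) ((hi c 2).add ((hi d 1).add (hi e 0)))]
  rw [intervalIntegral.integral_add (hi c 2) ((hi d 1).add (hi e 0))]
  rw [intervalIntegral.integral_add (hi d 1) (hi e 0)]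
  simp only [intervalIntegral.integral_const_mul, integral_pow]
  norm_num; ring

theorem stmt_7 : ∃ b c d u v : ℤ,
    (∃ n : ℕ, 0 < n ∧ (∫ x in (0:ℝ)..1, (b * x ^ 2 + c * x + d)) = n) ∧
    (∃ n : ℕ, 0 < n ∧ (∫ x in (0:ℝ)..1, (u * x + v)) = n) ∧
    (∃ n : ℕ, 0 < n ∧ (∫ x in (0:ℝ)..1, 2 * x) = n) ∧
    (∃ n : ℕ, 0 < n ∧ (∫ x in (0:ℝ)..1, (b * x ^ 2 + c * x + d) * (u * x + v)) = n) ∧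
    (∫ x in (0:ℝ)..1, (b * x ^ 2 + c * x + d) * (2 * x)) = 0 ∧
    (∫ x in (0:ℝ)..1, (u * x + v) * (2 * x)) = 0 ∧
    (∫ x in (0:ℝ)..1, (b * x ^ 2 + c * x + d) * (u * x + v) * (2 * x)) = 0 := by
  refine ⟨30, -36, 9, -6, 4, ⟨1, one_pos, ?_⟩, ⟨1, one_pos, ?_⟩, ⟨1, one_pos, ?_⟩,
    ⟨4, by norm_num, ?_⟩, ?_, ?_, ?_⟩
  · rw [show (∫ x in (0:ℝ)..1, ((30:ℤ) * x ^ 2 + (-36:ℤ) * x + ((9:ℤ):ℝ))) = ∫ x in (0:ℝ)..1, ((0:ℝ)*x^4+0*x^3+30*x^2+(-36)*x+9) from by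
      congr 1; funext x; push_cast; ring]
    rw [poly_int]; norm_num
  · rw [show (∫ x in (0:ℝ)..1, ((-6:ℤ) * x + ((4:ℤ):ℝ))) = ∫ x in (0:ℝ)..1, ((0:ℝ)*x^4+0*x^3+0*x^2+(-6)*x+4) from by
      congr 1; funext x; push_cast; ring]
    rw [poly_int]; norm_num
  · rw [show (∫ x in (0:ℝ)..1, (2 * x)) = ∫ x in (0:ℝ)..1, ((0:ℝ)*x^4+0*x^3+0*x^2+2*x+0) from by
      congr 1; funext x; push_cast; ring]
    rw [poly_int]; norm_num
  · rw [show (∫ x in (0:ℝ)..1, (((30:ℤ) * x ^ 2 + (-36:ℤ) * x + ((9:ℤ):ℝ)) * ((-6:ℤ) * x + ((4:ℤ):ℝ)))) = ∫ x in (0:ℝ)..1, ((0:ℝ)*x^4+(-180)*x^3+336*x^2+(-198)*x+36) from by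
      congr 1; funext x; push_cast; ring]
    rw [poly_int]; norm_num
  · rw [show (∫ x in (0:ℝ)..1, (((30:ℤ) * x ^ 2 + (-36:ℤ) * x + ((9:ℤ):ℝ)) * (2 * x))) = ∫ x in (0:ℝ)..1, ((0:ℝ)*x^4+60*x^3+(-72)*x^2+18*x+0) from by
      congr 1; funext x; push_cast; ring]
    rw [poly_int]; norm_num
  · rw [show (∫ x in (0:ℝ)..1, (((-6:ℤ) * x + ((4:ℤ):ℝ)) * (2 * x))) = ∫ x in (0:ℝ)..1, ((0:ℝ)*x^4+0*x^3+(-12)*x^2+8*x+0) from by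
      congr 1; funext x; push_cast; ring]
    rw [poly_int]; norm_num
  · rw [show (∫ x in (0:ℝ)..1, (((30:ℤ) * x ^ 2 + (-36:ℤ) * x + ((9:ℤ):ℝ)) * ((-6:ℤ) * x + ((4:ℤ):ℝ)) * (2 * x))) = ∫ x in (0:ℝ)..1, ((-360:ℝ)*x^4+672*x^3+(-396)*x^2+72*x+0) from by
      congr 1; funext x; push_cast; ring]
    rw [poly_int]; norm_num
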